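/- arXiv:2003.00199 — 5 statements merged into one kernel-verified Lean document; each statement's English description precedes it below -/
import Mathlib

section
/- The set C(e, t) = { s ∈ ℝ_+^K : ∑_{k∈S} s_k ≤ B * t * log₂(1 + (∑_{k∈S} e_k h_k)/(t σ²)) for all nonempty subsets S of {1,…,K} } is a convex set in s, and jointly convex in (s, e, t) for t > 0 and e ∈ ℝ_+^K. -/
/-!
Every constraint bounds a linear function of `s` by `B t log₂(1 + (∑ₖ∈S eₖhₖ)/(tσ²))`, which is
`B / log 2` times the perspective `(x, t) ↦ t f(x/t)` of the concave `f y = log (1 + y/σ²)`,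
evaluated at the linear image `(∑ₖ∈S eₖhₖ, t)` of `(e, t)`. Perspectives of concave functions are
concave, so each constraint cuts out a convex set and so does their intersection; for fixed
`(e, t)` the region in `s` is a slice of this convex set.
-/

open Set Finset

-- For `a + b = 1`, `a, b ≥ 0`, this rewrites `(a x₁ + b x₂)/(a t₁ + b t₂)` as a convex combination
-- of `x₁/t₁` and `x₂/t₂`: the reason perspectives of concave functions are concave.
theorem inv_smul_add_smul_eq {𝕜 E : Type*} [Field 𝕜] [AddCommGroup E] [Module 𝕜 E] (x₁ x₂ : E)
    {t₁ t₂ : 𝕜} (ht₁ : t₁ ≠ 0) (ht₂ : t₂ ≠ 0) (a b : 𝕜) :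
    (a * t₁ + b * t₂)⁻¹ • (a • x₁ + b • x₂) =
      (a * t₁ / (a * t₁ + b * t₂)) • t₁⁻¹ • x₁ + (b * t₂ / (a * t₁ + b * t₂)) • t₂⁻¹ • x₂ := by
  simp only [smul_add, smul_smul]
  congr 2 <;> field_simp

theorem ConcaveOn.perspective {𝕜 E : Type*} [Field 𝕜] [LinearOrder 𝕜] [IsStrictOrderedRing 𝕜]
    [AddCommGroup E] [Module 𝕜 E] {s : Set E} {f : E → 𝕜} (hf : ConcaveOn 𝕜 s f) :
    ConcaveOn 𝕜 {p : E × 𝕜 | 0 < p.2 ∧ p.2⁻¹ • p.1 ∈ s} (fun p => p.2 * f (p.2⁻¹ • p.1)) := by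
  have hconv : Convex 𝕜 {p : E × 𝕜 | 0 < p.2 ∧ p.2⁻¹ • p.1 ∈ s} := by
    rintro ⟨x₁, t₁⟩ ⟨ht₁, hy₁⟩ ⟨x₂, t₂⟩ ⟨ht₂, hy₂⟩ a b ha hb hab
    have ht : 0 < a * t₁ + b * t₂ := convex_Ioi (0:𝕜) ht₁ ht₂ ha hb hab
    refine ⟨ht, ?_⟩
    simp only [Prod.smul_mk, Prod.mk_add_mk, smul_eq_mul]
    rw [inv_smul_add_smul_eq x₁ x₂ ht₁.ne' ht₂.ne']
    exact hf.1 hy₁ hy₂ (by positivity) (by positivity) (by field_simp)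
  refine ⟨hconv, ?_⟩
  rintro ⟨x₁, t₁⟩ ⟨ht₁, hy₁⟩ ⟨x₂, t₂⟩ ⟨ht₂, hy₂⟩ a b ha hb hab
  have ht : 0 < a * t₁ + b * t₂ := convex_Ioi (0:𝕜) ht₁ ht₂ ha hb hab
  simp only [Prod.smul_mk, Prod.mk_add_mk, smul_eq_mul]
  rw [inv_smul_add_smul_eq x₁ x₂ ht₁.ne' ht₂.ne']
  calc a * (t₁ * f (t₁⁻¹ • x₁)) + b * (t₂ * f (t₂⁻¹ • x₂))
      = (a * t₁ + b * t₂) * ((a * t₁ / (a * t₁ + b * t₂)) • f (t₁⁻¹ • x₁)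
          + (b * t₂ / (a * t₁ + b * t₂)) • f (t₂⁻¹ • x₂)) := by
        simp only [smul_eq_mul]; field_simp
    _ ≤ _ := by
        gcongr
        exact hf.2 hy₁ hy₂ (by positivity) (by positivity) (by field_simp)

theorem concaveOn_log_one_add_div {c : ℝ} (hc : 0 < c) :
    ConcaveOn ℝ (Ici 0) (fun y => Real.log (1 + y / c)) := by
  refine ⟨convex_Ici 0, fun y₁ hy₁ y₂ hy₂ a b ha hb hab => ?_⟩
  have hu₁ : 0 < 1 + y₁ / c := by have : (0:ℝ) ≤ y₁ := hy₁; positivity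
  have hu₂ : 0 < 1 + y₂ / c := by have : (0:ℝ) ≤ y₂ := hy₂; positivity
  convert strictConcaveOn_log_Ioi.concaveOn.2 hu₁ hu₂ ha hb hab using 2
  simp only [smul_eq_mul]
  field_simp
  linear_combination -c * hab

noncomputable def macCapacity {ι : Type*} (B σ2 : ℝ) (h : ι → ℝ) (S : Finset ι)
    (e : ι → ℝ) (t : ℝ) : ℝ :=
  B * t * Real.logb 2 (1 + (∑ k ∈ S, e k * h k) / (t * σ2))

def weightedSum {ι : Type*} (h : ι → ℝ) (S : Finset ι) : (ι → ℝ) →ₗ[ℝ] ℝ where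
  toFun e := ∑ k ∈ S, e k * h k
  map_add' e₁ e₂ := by simp only [Pi.add_apply, add_mul, sum_add_distrib]
  map_smul' c e := by simp only [Pi.smul_apply, smul_eq_mul, mul_sum, mul_assoc, RingHom.id_apply]

theorem convex_pos_time_nonneg_energy {ι : Type*} :
    Convex ℝ {p : (ι → ℝ) × ℝ | 0 < p.2 ∧ ∀ k, 0 ≤ p.1 k} := by
  rintro ⟨e₁, t₁⟩ ⟨ht₁, he₁⟩ ⟨e₂, t₂⟩ ⟨ht₂, he₂⟩ a b ha hb hab
  exact ⟨convex_Ioi (0:ℝ) ht₁ ht₂ ha hb hab, fun k => convex_Ici (0:ℝ) (he₁ k) (he₂ k) ha hb hab⟩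

theorem concaveOn_macCapacity {ι : Type*} {B σ2 : ℝ} (hB : 0 ≤ B) (hσ2 : 0 < σ2) {h : ι → ℝ}
    (hh : ∀ k, 0 ≤ h k) (S : Finset ι) :
    ConcaveOn ℝ {p : (ι → ℝ) × ℝ | 0 < p.2 ∧ ∀ k, 0 ≤ p.1 k}
      (fun p => macCapacity B σ2 h S p.1 p.2) := by
  have hlog := ((concaveOn_log_one_add_div hσ2).perspective.comp_linearMap
    ((weightedSum h S).prodMap LinearMap.id)).smul (c := B / Real.log 2) (by positivity)
  refine (hlog.subset ?_ convex_pos_time_nonneg_energy).congr ?_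
  · rintro ⟨e, t⟩ ⟨ht, he⟩
    exact ⟨ht, smul_nonneg (inv_nonneg.2 ht.le) (sum_nonneg fun k _ => mul_nonneg (he k) (hh k))⟩
  · rintro ⟨e, t⟩ -
    simp only [smul_eq_mul, weightedSum, Function.comp_apply, LinearMap.prodMap_apply,
      LinearMap.coe_mk, AddHom.coe_mk, LinearMap.id_coe, id_eq, macCapacity, Real.logb]
    rw [inv_mul_eq_div, div_div]
    ring

theorem convex_setOf_sum_le_macCapacity {ι : Type*} {B σ2 : ℝ} (hB : 0 ≤ B) (hσ2 : 0 < σ2)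
    {h : ι → ℝ} (hh : ∀ k, 0 ≤ h k) :
    Convex ℝ {q : (ι → ℝ) × (ι → ℝ) × ℝ |
      0 < q.2.2 ∧ (∀ k, 0 ≤ q.2.1 k) ∧ (∀ k, 0 ≤ q.1 k) ∧
      ∀ S : Finset ι, S.Nonempty → ∑ k ∈ S, q.1 k ≤ macCapacity B σ2 h S q.2.1 q.2.2} := by
  rintro ⟨s₁, e₁, t₁⟩ ⟨ht₁, he₁, hs₁, hc₁⟩ ⟨s₂, e₂, t₂⟩ ⟨ht₂, he₂, hs₂, hc₂⟩ a b ha hb hab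
  obtain ⟨ht, he⟩ := convex_pos_time_nonneg_energy ⟨ht₁, he₁⟩ ⟨ht₂, he₂⟩ ha hb hab
  refine ⟨ht, he, fun k => convex_Ici (0:ℝ) (hs₁ k) (hs₂ k) ha hb hab, fun S hS => ?_⟩
  calc ∑ k ∈ S, (a • s₁ + b • s₂) k = a * ∑ k ∈ S, s₁ k + b * ∑ k ∈ S, s₂ k := by
        simp only [Pi.add_apply, Pi.smul_apply, smul_eq_mul, sum_add_distrib, mul_sum]
    _ ≤ a * macCapacity B σ2 h S e₁ t₁ + b * macCapacity B σ2 h S e₂ t₂ := by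
        gcongr
        exacts [hc₁ S hS, hc₂ S hS]
    _ ≤ macCapacity B σ2 h S (a • e₁ + b • e₂) (a * t₁ + b * t₂) :=
        (concaveOn_macCapacity hB hσ2 hh S).2 (x := (e₁, t₁)) (y := (e₂, t₂))
          ⟨ht₁, he₁⟩ ⟨ht₂, he₂⟩ ha hb hab

theorem Convex.preimage_prodMk_const {𝕜 E F : Type*} [Semiring 𝕜] [PartialOrder 𝕜]
    [AddCommMonoid E] [AddCommMonoid F] [Module 𝕜 E] [Module 𝕜 F] {s : Set (E × F)}
    (hs : Convex 𝕜 s) (c : F) : Convex 𝕜 ((fun x => (x, c)) ⁻¹' s) := by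
  intro x hx y hy a b ha hb hab
  simpa [Prod.smul_mk, Prod.mk_add_mk, ← add_smul, hab] using hs hx hy ha hb hab

/-- The region `C(e,t)` of uploadable bit vectors is convex in `s` for fixed `(e,t)`,
and the corresponding set is jointly convex in `(s, e, t)` for `t > 0`, `e ≥ 0`. -/
theorem stmt_4 (K : ℕ) (B σ2 : ℝ) (hB : 0 < B) (hσ2 : 0 < σ2)
    (h : Fin K → ℝ) (hh : ∀ k, 0 < h k) :
    (∀ (e : Fin K → ℝ), (∀ k, 0 ≤ e k) → ∀ t : ℝ, 0 < t →
      Convex ℝ {s : Fin K → ℝ |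
        (∀ k, 0 ≤ s k) ∧
        ∀ S : Finset (Fin K), S.Nonempty →
          ∑ k ∈ S, s k ≤ B * t * Real.logb 2 (1 + (∑ k ∈ S, e k * h k) / (t * σ2))}) ∧
    Convex ℝ {q : (Fin K → ℝ) × (Fin K → ℝ) × ℝ |
      0 < q.2.2 ∧ (∀ k, 0 ≤ q.2.1 k) ∧ (∀ k, 0 ≤ q.1 k) ∧
      ∀ S : Finset (Fin K), S.Nonempty →
        ∑ k ∈ S, q.1 k ≤
          B * q.2.2 * Real.logb 2 (1 + (∑ k ∈ S, q.2.1 k * h k) / (q.2.2 * σ2))} := by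
  have hregion := convex_setOf_sum_le_macCapacity hB.le hσ2 fun k => (hh k).le
  refine ⟨fun e he t ht => ?_, hregion⟩
  refine Eq.subst (motive := Convex ℝ) ?_ (hregion.preimage_prodMk_const (e, t))
  ext s
  simp [he, ht, macCapacity]
end

section
/- The MMSE-SIC rate vector r^(π) (with r_{π(k)} = B log₂((σ² + ∑_{n≤k} p_{π(n)} h_{π(n)})/(σ² + ∑_{n<k} p_{π(n)} h_{π(n)}))) lies in the NOMA capacity region R_NOMA(p), i.e., satisfies ∑_{k∈S} r_k ≤ B log₂(1 + ∑_{k∈S} p_k h_k/σ²) for every subset S. -/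
/-!
Write `c j = p (π j) * h (π j)` and `P j = ∑_{i < j} c i`, so that the rate of user `π j` is
`B log₂ ((σ² + P j + c j) / (σ² + P j))`. Over `T = π⁻¹(S)` the rates add up to `B log₂` of the
product of these ratios. Since `x ↦ (x + c) / x` is antitone, each factor only grows when `P j` is
replaced by the smaller partial sum of `c` over `{i ∈ T | i < j}`; the product then telescopes to
`(σ² + ∑_{j ∈ T} c j) / σ²`.
-/

open Finset

lemma add_div_self_le_add_div_self {a b c : ℝ} (ha : 0 < a) (hab : a ≤ b) (hc : 0 ≤ c) :
    (b + c) / b ≤ (a + c) / a := by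
  rw [add_div, add_div, div_self ha.ne', div_self (ha.trans_le hab).ne']
  gcongr

theorem prod_prefix_ratio_le {ι : Type*} [LinearOrder ι] [LocallyFiniteOrderBot ι]
    {c : ι → ℝ} {s : ℝ} (hc : ∀ i, 0 ≤ c i) (hs : 0 < s) (T : Finset ι) :
    ∏ j ∈ T, (s + ∑ i ∈ Iic j, c i) / (s + ∑ i ∈ Iio j, c i) ≤ (s + ∑ j ∈ T, c j) / s := by
  have hsum (t : Finset ι) : 0 ≤ ∑ i ∈ t, c i := sum_nonneg fun i _ => hc i
  induction T using Finset.induction_on_max with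
  | empty => simp [hs.ne']
  | insert m T hlt ih =>
    have hm : m ∉ T := fun hm => (hlt m hm).false
    have hT_le : ∑ j ∈ T, c j ≤ ∑ i ∈ Iio m, c i :=
      sum_le_sum_of_subset_of_nonneg (fun x hx => mem_Iio.2 (hlt x hx)) fun i _ _ => hc i
    rw [prod_insert hm, sum_insert hm, Iic_eq_cons_Iio, sum_cons, add_comm (c m), ← add_assoc]
    calc (s + ∑ i ∈ Iio m, c i + c m) / (s + ∑ i ∈ Iio m, c i) *
          ∏ j ∈ T, (s + ∑ i ∈ Iic j, c i) / (s + ∑ i ∈ Iio j, c i)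
        ≤ (s + ∑ j ∈ T, c j + c m) / (s + ∑ j ∈ T, c j) * ((s + ∑ j ∈ T, c j) / s) := by
          refine mul_le_mul
            (add_div_self_le_add_div_self (by linarith [hsum T]) (by linarith) (hc m)) ih ?_ ?_
          · exact prod_nonneg fun j _ =>
              div_nonneg (by linarith [hsum (Iic j)]) (by linarith [hsum (Iio j)])
          · exact div_nonneg (by linarith [hc m, hsum T]) (by linarith [hsum T])
      _ = (s + (c m + ∑ j ∈ T, c j)) / s := by
          rw [div_mul_div_cancel₀ (ne_of_gt (by linarith [hsum T] : 0 < s + ∑ j ∈ T, c j))]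
          ring

/-- The MMSE-SIC rate vector under decoding order `π` lies in the NOMA capacity
region: every subset sum-rate constraint holds. Here `q u` is the rate of user `u`,
i.e. `q (π k)` is the SIC rate `r_{π(k)}`. -/
theorem stmt_7 (K : ℕ) (B σ2 : ℝ) (hB : 0 < B) (hσ2 : 0 < σ2)
    (p h : Fin K → ℝ) (hp : ∀ k, 0 ≤ p k) (hh : ∀ k, 0 < h k)
    (π : Equiv.Perm (Fin K))
    (A : ℕ → ℝ)
    (hA : ∀ m, A m = ∑ n ∈ Finset.univ.filter (fun n : Fin K => (n : ℕ) < m),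
      p (π n) * h (π n))
    (q : Fin K → ℝ)
    (hq : ∀ k : Fin K, q (π k) = B * Real.logb 2 ((σ2 + A (k + 1)) / (σ2 + A k))) :
    ∀ S : Finset (Fin K),
      ∑ k ∈ S, q k ≤ B * Real.logb 2 (1 + (∑ k ∈ S, p k * h k) / σ2) := by
  intro S
  set c : Fin K → ℝ := fun j => p (π j) * h (π j)
  have hc (j : Fin K) : 0 ≤ c j := mul_nonneg (hp _) (hh _).le
  have hA_Iio (j : Fin K) : A j = ∑ i ∈ Iio j, c i := by
    rw [hA]; congr 1; ext
    simp only [mem_filter, mem_univ, true_and, mem_Iio, Fin.lt_def]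
  have hA_Iic (j : Fin K) : A (j + 1) = ∑ i ∈ Iic j, c i := by
    rw [hA]; congr 1; ext
    simp only [mem_filter, mem_univ, true_and, mem_Iic, Fin.le_def, Nat.lt_succ_iff]
  have hratio_pos (j : Fin K) : 0 < (σ2 + A (j + 1)) / (σ2 + A j) := by
    rw [hA_Iio, hA_Iic]
    exact div_pos (by linarith [sum_nonneg fun i (_ : i ∈ Iic j) => hc i])
      (by linarith [sum_nonneg fun i (_ : i ∈ Iio j) => hc i])
  set T := S.map π.symm.toEmbedding
  have hreindex (f : Fin K → ℝ) : ∑ k ∈ S, f k = ∑ j ∈ T, f (π j) := by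
    simp [T, sum_map]
  calc ∑ k ∈ S, q k
      = B * Real.logb 2 (∏ j ∈ T, (σ2 + A (j + 1)) / (σ2 + A j)) := by
        rw [hreindex, Real.logb_prod _ _ fun j _ => (hratio_pos j).ne', mul_sum]
        exact sum_congr rfl fun j _ => hq j
    _ ≤ B * Real.logb 2 ((σ2 + ∑ j ∈ T, c j) / σ2) := by
        gcongr
        · norm_num
        · exact prod_pos fun j _ => hratio_pos j
        · simp only [hA_Iio, hA_Iic]
          exact prod_prefix_ratio_le hc hσ2 T
    _ = B * Real.logb 2 (1 + (∑ k ∈ S, p k * h k) / σ2) := by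
        rw [hreindex, add_div, div_self hσ2.ne']
end

section
/- Given S, B, σ², h > 0 and ζ > 0, the equation 2^{S/(Bt)} (σ²/h)(1 − (S ln 2)/(B t)) − σ²/h + ζ = 0 has at most one solution t > 0, and the minimizer of φ(t) = (2^{S/(Bt)} − 1) t σ²/h + ζ t over t ≥ t_min (where t_min = S/(B log₂(1 + P_max h/σ²)) for P_max > 0) is max(τ*, t_min) where τ* solves the equation (when a solution exists). -/
/-!
The derivative of `φ` is `φ'(t) = (σ²/h) (ψ(S/(Bt)) - 1) + ζ` with `ψ(u) = 2^u (1 - u ln 2)`.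
Since `ψ'(u) = -2^u (ln 2)² u < 0` for `u > 0` and `t ↦ S/(Bt)` is decreasing, `φ'` is strictly
increasing on `(0, ∞)`: the stationarity equation `φ' = 0` has at most one root `τ`, and `φ`
decreases on `(0, τ]` and increases on `[τ, ∞)`. Hence on `[t_min, ∞)` the minimum sits at `τ`
if `τ ≥ t_min` and at `t_min` otherwise.
-/

open Real Set

lemma isMinOn_max_of_antitoneOn_of_monotoneOn {α β : Type*} [LinearOrder α] [Preorder β]
    {f : α → β} {a τ m : α} (hanti : AntitoneOn f (Ioc a τ)) (hmono : MonotoneOn f (Ici τ))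
    (ham : a < m) : IsMinOn f (Ici m) (max τ m) := by
  intro t (hmt : m ≤ t)
  rcases le_total τ m with hτm | hmτ
  · rw [max_eq_right hτm]
    exact hmono (hτm : τ ≤ m) (hτm.trans hmt : τ ≤ t) hmt
  · rw [max_eq_left hmτ]
    rcases le_total τ t with hτt | htτ
    · exact hmono (le_refl τ) hτt hτt
    · exact hanti ⟨ham.trans_le hmt, htτ⟩ ⟨ham.trans_le hmτ, le_rfl⟩ htτ

lemma antitoneOn_Ioc_and_monotoneOn_Ici_of_hasDerivAt {f f' : ℝ → ℝ} {a τ : ℝ}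
    (hf : ∀ t ∈ Ioi a, HasDerivAt f (f' t) t) (hf' : MonotoneOn f' (Ioi a)) (haτ : a < τ)
    (hτ : f' τ = 0) : AntitoneOn f (Ioc a τ) ∧ MonotoneOn f (Ici τ) := by
  have hcont : ∀ s ⊆ Ioi a, ContinuousOn f s := fun s hs t ht =>
    (hf t (hs ht)).continuousAt.continuousWithinAt
  constructor
  · refine antitoneOn_of_hasDerivWithinAt_nonpos (convex_Ioc a τ)
      (hcont _ Ioc_subset_Ioi_self) (fun t ht => (hf t ?_).hasDerivWithinAt) fun t ht => ?_ <;>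
      rw [interior_Ioc] at ht
    · exact ht.1
    · exact hτ ▸ hf' ht.1 haτ ht.2.le
  · refine monotoneOn_of_hasDerivWithinAt_nonneg (convex_Ici τ)
      (hcont _ (Ici_subset_Ioi.2 haτ)) (fun t ht => (hf t ?_).hasDerivWithinAt) fun t ht => ?_ <;>
      rw [interior_Ici] at ht
    · exact haτ.trans ht
    · exact hτ ▸ hf' haτ (haτ.trans ht) ht.le

lemma hasDerivAt_rpow_mul_one_sub_mul_log {b : ℝ} (hb : 0 < b) (u : ℝ) :
    HasDerivAt (fun u => b ^ u * (1 - u * log b)) (-(b ^ u * log b ^ 2 * u)) u := by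
  have hpow := (hasStrictDerivAt_const_rpow hb u).hasDerivAt
  have hlin := ((hasDerivAt_id u).mul_const (log b)).const_sub 1
  refine (hpow.fun_mul hlin).congr_deriv ?_
  simp only [id]
  ring

lemma strictAntiOn_rpow_mul_one_sub_mul_log {b : ℝ} (hb : 0 < b) (hb1 : b ≠ 1) :
    StrictAntiOn (fun u => b ^ u * (1 - u * log b)) (Ici 0) := by
  have hlog : log b ≠ 0 := log_ne_zero_of_pos_of_ne_one hb hb1
  refine strictAntiOn_of_hasDerivWithinAt_neg (convex_Ici 0)
    (fun u _ => (hasDerivAt_rpow_mul_one_sub_mul_log hb u).continuousAt.continuousWithinAt)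
    (fun u _ => (hasDerivAt_rpow_mul_one_sub_mul_log hb u).hasDerivWithinAt) fun u hu => ?_
  rw [interior_Ici] at hu
  have : 0 < b ^ u * log b ^ 2 * u :=
    mul_pos (mul_pos (rpow_pos_of_pos hb u) (pow_two_pos_of_ne_zero hlog)) hu
  linarith

lemma strictMonoOn_rpow_div_mul_one_sub_div_mul_log {b k : ℝ} (hb : 0 < b) (hb1 : b ≠ 1)
    (hk : 0 < k) : StrictMonoOn (fun t => b ^ (k / t) * (1 - k / t * log b)) (Ioi 0) :=
  fun _ hs _ ht hst => strictAntiOn_rpow_mul_one_sub_mul_log hb hb1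
    (div_pos hk ht).le (div_pos hk hs).le (div_lt_div_of_pos_left hk hs hst)

lemma hasDerivAt_mul_rpow_div_sub_one {b k t : ℝ} (hb : 0 < b) (ht : t ≠ 0) :
    HasDerivAt (fun t => t * (b ^ (k / t) - 1)) (b ^ (k / t) * (1 - k / t * log b) - 1) t := by
  have hdiv : HasDerivAt (fun t => k / t) (-k / t ^ 2) t := by
    simpa [div_eq_mul_inv] using (hasDerivAt_inv ht).const_mul k
  refine ((hasDerivAt_id t).fun_mul ((hdiv.const_rpow hb).sub_const 1)).congr_deriv ?_
  simp only [id]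
  field_simp
  ring

theorem stmt_12_general (S B σ2 h ζ Pmax : ℝ) (hS : 0 < S) (hB : 0 < B) (hσ2 : 0 < σ2)
    (hh : 0 < h) (hP : 0 < Pmax)
    (φ : ℝ → ℝ)
    (hφ : ∀ t, φ t = ((2 : ℝ) ^ (S / (B * t)) - 1) * t * σ2 / h + ζ * t)
    (eqn : ℝ → Prop)
    (heqn : ∀ t, eqn t ↔
      (2 : ℝ) ^ (S / (B * t)) * (σ2 / h) * (1 - S * Real.log 2 / (B * t))
        - σ2 / h + ζ = 0)
    (tmin : ℝ) (htmin : tmin = S / (B * Real.logb 2 (1 + Pmax * h / σ2))) :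
    (∀ t1 t2 : ℝ, 0 < t1 → 0 < t2 → eqn t1 → eqn t2 → t1 = t2) ∧
    ∀ τ : ℝ, 0 < τ → eqn τ → ∀ t : ℝ, tmin ≤ t → φ (max τ tmin) ≤ φ t := by
  set φ' : ℝ → ℝ := fun t => σ2 / h * ((2 : ℝ) ^ (S / B / t) * (1 - S / B / t * log 2) - 1) + ζ
  have hφ'_mono : StrictMonoOn φ' (Ioi 0) := fun s hs t ht hst => by
    have := strictMonoOn_rpow_div_mul_one_sub_div_mul_log (b := 2) (by norm_num) (by norm_num)
      (div_pos hS hB) hs ht hst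
    have hc : 0 < σ2 / h := div_pos hσ2 hh
    simp only [φ']
    gcongr
  have hφ_deriv : ∀ t ∈ Ioi 0, HasDerivAt φ (φ' t) t := fun t ht => by
    have hφ_eq : φ = fun t => σ2 / h * (t * ((2 : ℝ) ^ (S / B / t) - 1)) + ζ * t := by
      ext t; rw [hφ, div_div]; ring
    rw [hφ_eq]
    exact (((hasDerivAt_mul_rpow_div_sub_one (by norm_num) (ne_of_gt ht)).const_mul _).add
      ((hasDerivAt_id t).const_mul ζ)).congr_deriv (by simp [φ'])
  have heqn' : ∀ t, eqn t ↔ φ' t = 0 := fun t => by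
    rw [heqn, ← div_div]; constructor <;> intro h0 <;> linear_combination h0
  have htmin_pos : 0 < tmin := by
    rw [htmin]
    have : 0 < Pmax * h / σ2 := by positivity
    exact div_pos hS (mul_pos hB (logb_pos (by norm_num) (by linarith)))
  refine ⟨fun t1 t2 ht1 ht2 he1 he2 =>
    hφ'_mono.injOn ht1 ht2 (((heqn' t1).1 he1).trans ((heqn' t2).1 he2).symm),
    fun τ hτ he => ?_⟩
  obtain ⟨hanti, hmono⟩ := antitoneOn_Ioc_and_monotoneOn_Ici_of_hasDerivAt hφ_deriv
    hφ'_mono.monotoneOn hτ ((heqn' τ).1 he)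
  exact fun t ht => isMinOn_max_of_antitoneOn_of_monotoneOn hanti hmono htmin_pos ht

/-- The stationarity equation `2^{S/(Bt)} (σ²/h)(1 − S ln2/(Bt)) − σ²/h + ζ = 0`
has at most one positive solution, and if `τ*` is such a solution then the minimizer
of `φ(t) = (2^{S/(Bt)} − 1) t σ²/h + ζ t` over `t ≥ t_min` is `max(τ*, t_min)`,
where `t_min = S/(B log₂(1 + P_max h/σ²))`. -/
theorem stmt_12 (S B σ2 h ζ Pmax : ℝ) (hS : 0 < S) (hB : 0 < B) (hσ2 : 0 < σ2)
    (hh : 0 < h) (hζ : 0 < ζ) (hP : 0 < Pmax)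
    (φ : ℝ → ℝ)
    (hφ : ∀ t, φ t = ((2 : ℝ) ^ (S / (B * t)) - 1) * t * σ2 / h + ζ * t)
    (eqn : ℝ → Prop)
    (heqn : ∀ t, eqn t ↔
      (2 : ℝ) ^ (S / (B * t)) * (σ2 / h) * (1 - S * Real.log 2 / (B * t))
        - σ2 / h + ζ = 0)
    (tmin : ℝ) (htmin : tmin = S / (B * Real.logb 2 (1 + Pmax * h / σ2))) :
    (∀ t1 t2 : ℝ, 0 < t1 → 0 < t2 → eqn t1 → eqn t2 → t1 = t2) ∧
    ∀ τ : ℝ, 0 < τ → eqn τ → ∀ t : ℝ, tmin ≤ t → φ (max τ tmin) ≤ φ t :=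
  stmt_12_general S B σ2 h ζ Pmax hS hB hσ2 hh hP φ hφ eqn heqn tmin htmin
end

section
/- Any feasible solution of the TDMA energy minimization problem (P2) yields a feasible solution of the NOMA problem (P1) with equal objective value; hence the optimal NOMA energy is at most the optimal TDMA energy, and NOMA's minimum training delay T_min^NOMA ≤ T_min^TDMA. -/
/-!
A TDMA schedule with slot lengths `tup k` is emulated under NOMA by letting every device transmit
during the whole frame `W = ∑ k, tup k` at its time-averaged power `p k * tup k / W` and at the
common rate `S / W`. Each device's uplink energy is unchanged, and the rates stay in the NOMA
capacity region by Jensen's inequality for the concave map `x ↦ log (1 + x)` with the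
sub-probability weights `tup k / W`; the missing mass sits at `0`, where the map vanishes.
-/

open Finset

section Jensen

variable {𝕜 E β ι : Type*} [Field 𝕜] [LinearOrder 𝕜] [IsStrictOrderedRing 𝕜] [AddCommGroup E]
  [AddCommGroup β] [PartialOrder β] [IsOrderedAddMonoid β] [Module 𝕜 E] [Module 𝕜 β]
  [IsStrictOrderedModule 𝕜 β] {s : Set E} {f : E → β} {t : Finset ι} {w : ι → 𝕜} {p : ι → E}

theorem ConcaveOn.sum_smul_le_map_sum_of_sum_le_one (hf : ConcaveOn 𝕜 s f) (h0 : (0 : E) ∈ s)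
    (hf0 : 0 ≤ f 0) (hw₀ : ∀ i ∈ t, 0 ≤ w i) (hw₁ : ∑ i ∈ t, w i ≤ 1)
    (hp : ∀ i ∈ t, p i ∈ s) :
    ∑ i ∈ t, w i • f (p i) ≤ f (∑ i ∈ t, w i • p i) := by
  set W := ∑ i ∈ t, w i
  rcases (sum_nonneg hw₀).eq_or_lt with hW | hW
  · have hw : ∀ i ∈ t, w i = 0 := (sum_eq_zero_iff_of_nonneg hw₀).1 hW.symm
    rw [sum_eq_zero fun i hi => by rw [hw i hi, zero_smul],
      sum_eq_zero fun i hi => by rw [hw i hi, zero_smul]]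
    exact hf0
  -- concavity between `0` and the centre of mass, which carries the total weight `W`
  have hc := hf.1.centerMass_mem hw₀ hW hp
  have hW' : W • t.centerMass w p = ∑ i ∈ t, w i • p i := smul_inv_smul₀ hW.ne' _
  calc ∑ i ∈ t, w i • f (p i) = W • t.centerMass w (f ∘ p) := (smul_inv_smul₀ hW.ne' _).symm
    _ ≤ W • f (t.centerMass w p) :=
        smul_le_smul_of_nonneg_left (hf.le_map_centerMass hw₀ hW hp) hW.le
    _ ≤ (1 - W) • f 0 + W • f (t.centerMass w p) :=
        le_add_of_nonneg_left (smul_nonneg (sub_nonneg.2 hw₁) hf0)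
    _ ≤ f ((1 - W) • 0 + W • t.centerMass w p) :=
        hf.2 h0 hc (sub_nonneg.2 hw₁) hW.le (sub_add_cancel 1 W)
    _ = f (∑ i ∈ t, w i • p i) := by rw [smul_zero, zero_add, hW']

end Jensen

open Real Set

theorem concaveOn_logb_one_add {b : ℝ} (hb : 1 ≤ b) :
    ConcaveOn ℝ (Ici 0) fun x => logb b (1 + x) := by
  have hlog : ConcaveOn ℝ (Ici 0) fun x => (log b)⁻¹ • log (1 + x) :=
    ((strictConcaveOn_log_Ioi.concaveOn.translate_right 1).subset
      (fun x (hx : 0 ≤ x) => show 0 < 1 + x by linarith) (convex_Ici 0)).smul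
      (inv_nonneg.2 (log_nonneg hb))
  simpa only [logb, smul_eq_mul, div_eq_inv_mul] using hlog

theorem sum_le_mul_logb_one_add_of_timeSharing {ι : Type*} (s : Finset ι) {B : ℝ}
    {θ x r : ι → ℝ} (hB : 0 ≤ B) (hθ : ∀ k ∈ s, 0 ≤ θ k) (hθ₁ : ∑ k ∈ s, θ k ≤ 1)
    (hx : ∀ k ∈ s, 0 ≤ x k) (hr : ∀ k ∈ s, r k ≤ B * (θ k * logb 2 (1 + x k))) :
    ∑ k ∈ s, r k ≤ B * logb 2 (1 + ∑ k ∈ s, θ k * x k) := by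
  have hJensen := (concaveOn_logb_one_add one_le_two).sum_smul_le_map_sum_of_sum_le_one
    (t := s) (p := x) self_mem_Ici (by simp) hθ hθ₁ hx
  simp only [smul_eq_mul] at hJensen
  calc ∑ k ∈ s, r k ≤ ∑ k ∈ s, B * (θ k * logb 2 (1 + x k)) := sum_le_sum hr
    _ = B * ∑ k ∈ s, θ k * logb 2 (1 + x k) := (mul_sum ..).symm
    _ ≤ B * logb 2 (1 + ∑ k ∈ s, θ k * x k) := mul_le_mul_of_nonneg_left hJensen hB

section Energy

variable {ι : Type*} [Fintype ι] (M N : ℕ) (Fk C fmax h ς : ι → ℝ) (S B σ2 Pmax : ℝ)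

def tdmaEnergies (T : ℝ) : Set ℝ :=
  {E : ℝ | ∃ (f p tup : ι → ℝ) (tloc : ℝ),
    (∀ k, 0 < f k ∧ f k ≤ fmax k) ∧
    (∀ k, 0 ≤ p k ∧ p k ≤ Pmax) ∧
    (∀ k, 0 ≤ tup k) ∧
    (∀ k, Fk k / (C k * f k) ≤ tloc) ∧
    (∀ k, S ≤ B * logb 2 (1 + p k * h k / σ2) * tup k) ∧
    (M : ℝ) * ((N : ℝ) * tloc + ∑ k, tup k) ≤ T ∧
    E = (M : ℝ) * ∑ k, ((N : ℝ) * (Fk k / C k) * ς k * (f k) ^ 2 + p k * tup k)}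

def nomaEnergies (T : ℝ) : Set ℝ :=
  {E : ℝ | ∃ (f p r : ι → ℝ) (tloc tup : ℝ),
    (∀ k, 0 < f k ∧ f k ≤ fmax k) ∧
    (∀ k, 0 ≤ p k ∧ p k ≤ Pmax) ∧
    0 ≤ tup ∧
    (∀ k, 0 ≤ r k) ∧
    (∀ s : Finset ι, ∑ k ∈ s, r k ≤ B * logb 2 (1 + (∑ k ∈ s, p k * h k) / σ2)) ∧
    (∀ k, S ≤ r k * tup) ∧
    (∀ k, Fk k / (C k * f k) ≤ tloc) ∧
    (M : ℝ) * ((N : ℝ) * tloc + tup) ≤ T ∧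
    E = (M : ℝ) * ∑ k, ((N : ℝ) * (Fk k / C k) * ς k * (f k) ^ 2 + p k * tup)}

variable {M N Fk C fmax h ς S B σ2 Pmax}

theorem nomaEnergies_bddBelow (hFk : ∀ k, 0 ≤ Fk k) (hC : ∀ k, 0 ≤ C k) (hς : ∀ k, 0 ≤ ς k)
    (T : ℝ) : BddBelow (nomaEnergies M N Fk C fmax h ς S B σ2 Pmax T) := by
  refine ⟨0, ?_⟩
  rintro E ⟨f, p, r, tloc, tup, -, hp, htup, -, -, -, -, -, rfl⟩
  have hcomp (k : ι) : 0 ≤ (N : ℝ) * (Fk k / C k) * ς k * f k ^ 2 := by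
    have := hFk k; have := hC k; have := hς k; positivity
  exact mul_nonneg M.cast_nonneg <| sum_nonneg fun k _ =>
    add_nonneg (hcomp k) (mul_nonneg (hp k).1 htup)

theorem tdmaEnergies_subset_nomaEnergies [Nonempty ι] (hS : 0 < S) (hB : 0 ≤ B)
    (hσ2 : 0 ≤ σ2) (hh : ∀ k, 0 ≤ h k) (T : ℝ) :
    tdmaEnergies M N Fk C fmax h ς S B σ2 Pmax T ⊆
      nomaEnergies M N Fk C fmax h ς S B σ2 Pmax T := by
  rintro E ⟨f, p, tup, tloc, hf, hp, htup, hloc, hrate, hT, rfl⟩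
  set W := ∑ k, tup k
  have hW : 0 < W := by
    obtain ⟨k⟩ := ‹Nonempty ι›
    have hk : 0 < tup k := (htup k).lt_of_ne fun h0 => by
      have := hrate k; rw [← h0, mul_zero] at this; linarith
    exact hk.trans_le (single_le_sum (fun j _ => htup j) (mem_univ k))
  refine ⟨f, fun k => p k * tup k / W, fun _ => S / W, tloc, W, hf, fun k => ⟨?_, ?_⟩, hW.le,
    fun _ => (div_pos hS hW).le, fun s => ?_, fun _ => (div_mul_cancel₀ S hW.ne').ge, hloc, hT, ?_⟩
  · exact div_nonneg (mul_nonneg (hp k).1 (htup k)) hW.le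
  · have hPmax : 0 ≤ Pmax := (hp k).1.trans (hp k).2
    exact div_le_of_le_mul₀ hW.le hPmax <| mul_le_mul (hp k).2
      (single_le_sum (fun j _ => htup j) (mem_univ k)) (htup k) hPmax
  · have hθ₁ : ∑ k ∈ s, tup k / W ≤ 1 := by
      rw [← sum_div]
      exact div_le_one_of_le₀ (sum_le_univ_sum_of_nonneg htup) hW.le
    have hr (k : ι) : S / W ≤ B * (tup k / W * logb 2 (1 + p k * h k / σ2)) := by
      calc S / W ≤ B * logb 2 (1 + p k * h k / σ2) * tup k / W :=
            div_le_div_of_nonneg_right (hrate k) hW.le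
        _ = B * (tup k / W * logb 2 (1 + p k * h k / σ2)) := by ring
    have hcap := sum_le_mul_logb_one_add_of_timeSharing s hB
      (fun k _ => div_nonneg (htup k) hW.le) hθ₁
      (fun k _ => div_nonneg (mul_nonneg (hp k).1 (hh k)) hσ2) (fun k _ => hr k)
    convert hcap using 4
    rw [sum_div]
    exact sum_congr rfl fun k _ => by ring
  · congr 1
    exact sum_congr rfl fun k _ => by rw [div_mul_cancel₀ _ hW.ne']

end Energy

theorem stmt_15_general (K M N : ℕ) (hK : 0 < K)
    (Fk C fmax h ς : Fin K → ℝ)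
    (hFk : ∀ k, 0 < Fk k) (hC : ∀ k, 0 < C k)
    (hh : ∀ k, 0 < h k) (hς : ∀ k, 0 < ς k)
    (S B σ2 Pmax : ℝ) (hS : 0 < S) (hB : 0 < B) (hσ2 : 0 < σ2)
    (ValP2 ValP1 : ℝ → Set ℝ)
    (hV2 : ∀ T : ℝ, ValP2 T = {E : ℝ | ∃ (f p tup : Fin K → ℝ) (tloc : ℝ),
      (∀ k, 0 < f k ∧ f k ≤ fmax k) ∧
      (∀ k, 0 ≤ p k ∧ p k ≤ Pmax) ∧
      (∀ k, 0 ≤ tup k) ∧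
      (∀ k, Fk k / (C k * f k) ≤ tloc) ∧
      (∀ k, S ≤ B * Real.logb 2 (1 + p k * h k / σ2) * tup k) ∧
      (M : ℝ) * ((N : ℝ) * tloc + ∑ k, tup k) ≤ T ∧
      E = (M : ℝ) * ∑ k, ((N : ℝ) * (Fk k / C k) * ς k * (f k) ^ 2 + p k * tup k)})
    (hV1 : ∀ T : ℝ, ValP1 T = {E : ℝ | ∃ (f p r : Fin K → ℝ) (tloc tup : ℝ),
      (∀ k, 0 < f k ∧ f k ≤ fmax k) ∧
      (∀ k, 0 ≤ p k ∧ p k ≤ Pmax) ∧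
      0 ≤ tup ∧
      (∀ k, 0 ≤ r k) ∧
      (∀ Sset : Finset (Fin K),
        ∑ k ∈ Sset, r k ≤ B * Real.logb 2 (1 + (∑ k ∈ Sset, p k * h k) / σ2)) ∧
      (∀ k, S ≤ r k * tup) ∧
      (∀ k, Fk k / (C k * f k) ≤ tloc) ∧
      (M : ℝ) * ((N : ℝ) * tloc + tup) ≤ T ∧
      E = (M : ℝ) * ∑ k, ((N : ℝ) * (Fk k / C k) * ς k * (f k) ^ 2 + p k * tup)}) :
    (∀ T : ℝ, ValP2 T ⊆ ValP1 T) ∧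
    (∀ T : ℝ, (ValP2 T).Nonempty → (ValP1 T).Nonempty) ∧
    (∀ T : ℝ, (ValP2 T).Nonempty → sInf (ValP1 T) ≤ sInf (ValP2 T)) := by
  have : Nonempty (Fin K) := ⟨⟨0, hK⟩⟩
  have hsub (T : ℝ) : ValP2 T ⊆ ValP1 T := by
    rw [hV2, hV1]
    exact tdmaEnergies_subset_nomaEnergies hS hB.le hσ2.le (fun k => (hh k).le) T
  have hbdd (T : ℝ) : BddBelow (ValP1 T) := by
    rw [hV1]
    exact nomaEnergies_bddBelow (fun k => (hFk k).le) (fun k => (hC k).le) (fun k => (hς k).le) T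
  exact ⟨hsub, fun T hne => hne.mono (hsub T), fun T hne => csInf_le_csInf (hbdd T) hne (hsub T)⟩

/-- Every objective value achievable by a feasible solution of the TDMA energy
minimization problem (P2) is also achievable in the NOMA problem (P1); hence (P1)'s
optimal energy is at most (P2)'s, and NOMA's minimum training delay is at most
TDMA's (feasibility of (P2) for a deadline `T` implies feasibility of (P1)). -/
theorem stmt_15 (K M N : ℕ) (hK : 0 < K) (hM : 0 < M) (hN : 0 < N)
    (Fk C fmax h ς : Fin K → ℝ)
    (hFk : ∀ k, 0 < Fk k) (hC : ∀ k, 0 < C k) (hfmax : ∀ k, 0 < fmax k)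
    (hh : ∀ k, 0 < h k) (hς : ∀ k, 0 < ς k)
    (S B σ2 Pmax : ℝ) (hS : 0 < S) (hB : 0 < B) (hσ2 : 0 < σ2) (hP : 0 < Pmax)
    (ValP2 ValP1 : ℝ → Set ℝ)
    (hV2 : ∀ T : ℝ, ValP2 T = {E : ℝ | ∃ (f p tup : Fin K → ℝ) (tloc : ℝ),
      (∀ k, 0 < f k ∧ f k ≤ fmax k) ∧
      (∀ k, 0 ≤ p k ∧ p k ≤ Pmax) ∧
      (∀ k, 0 ≤ tup k) ∧
      (∀ k, Fk k / (C k * f k) ≤ tloc) ∧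
      (∀ k, S ≤ B * Real.logb 2 (1 + p k * h k / σ2) * tup k) ∧
      (M : ℝ) * ((N : ℝ) * tloc + ∑ k, tup k) ≤ T ∧
      E = (M : ℝ) * ∑ k, ((N : ℝ) * (Fk k / C k) * ς k * (f k) ^ 2 + p k * tup k)})
    (hV1 : ∀ T : ℝ, ValP1 T = {E : ℝ | ∃ (f p r : Fin K → ℝ) (tloc tup : ℝ),
      (∀ k, 0 < f k ∧ f k ≤ fmax k) ∧
      (∀ k, 0 ≤ p k ∧ p k ≤ Pmax) ∧
      0 ≤ tup ∧
      (∀ k, 0 ≤ r k) ∧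
      (∀ Sset : Finset (Fin K),
        ∑ k ∈ Sset, r k ≤ B * Real.logb 2 (1 + (∑ k ∈ Sset, p k * h k) / σ2)) ∧
      (∀ k, S ≤ r k * tup) ∧
      (∀ k, Fk k / (C k * f k) ≤ tloc) ∧
      (M : ℝ) * ((N : ℝ) * tloc + tup) ≤ T ∧
      E = (M : ℝ) * ∑ k, ((N : ℝ) * (Fk k / C k) * ς k * (f k) ^ 2 + p k * tup)}) :
    (∀ T : ℝ, ValP2 T ⊆ ValP1 T) ∧
    (∀ T : ℝ, (ValP2 T).Nonempty → (ValP1 T).Nonempty) ∧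
    (∀ T : ℝ, (ValP2 T).Nonempty → sInf (ValP1 T) ≤ sInf (ValP2 T)) :=
  stmt_15_general K M N hK Fk C fmax h ς hFk hC hh hς S B σ2 Pmax hS hB hσ2 ValP2 ValP1 hV2 hV1
end

section
/- For the KKT system of minimizing c1 f² + c2/f over 0 ≤ f ≤ fmax with c1, c2, fmax > 0: any (f*, τ̲*, τ̄*) satisfying f* ∈ (0, fmax], τ̲*, τ̄* ≥ 0, complementary slackness τ̲* f* = 0 and τ̄*(f* − fmax) = 0, and stationarity 2 c1 f* − c2/(f*)² − τ̲* + τ̄* = 0, must have f* = min((c2/(2c1))^{1/3}, fmax). -/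
/-!
Complementary slackness kills the lower multiplier since `f* > 0`, and multiplying the
stationarity condition by `f*²` gives `2 c₁ f*³ + τ̄* f*² = c₂`, so `f*³ ≤ c₂/(2c₁)` with
equality when `τ̄* = 0`. Either the upper constraint is slack, `τ̄* = 0` and `f*` is the cube
root, or it is active, `f* = fmax` lies below the cube root; in both cases `f*` is the minimum.
-/

namespace Real

theorem le_rpow_one_div_three_iff {x y : ℝ} (hx : 0 ≤ x) (hy : 0 ≤ y) :
    x ≤ y ^ ((1 : ℝ) / 3) ↔ x ^ 3 ≤ y := by
  rw [one_div, le_rpow_inv_iff_of_pos hx hy three_pos]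
  norm_cast

theorem eq_rpow_one_div_three_iff {x y : ℝ} (hx : 0 ≤ x) (hy : 0 ≤ y) :
    x = y ^ ((1 : ℝ) / 3) ↔ x ^ 3 = y := by
  rw [one_div, eq_rpow_inv hx hy three_ne_zero]
  norm_cast

end Real

theorem stmt_16_general (c1 c2 fmax : ℝ) (hc1 : 0 < c1)
    (fstar τlo τhi : ℝ)
    (hf : fstar ∈ Set.Ioc (0 : ℝ) fmax)
    (hτhi : 0 ≤ τhi)
    (hcs1 : τlo * fstar = 0) (hcs2 : τhi * (fstar - fmax) = 0)
    (hstat : 2 * c1 * fstar - c2 / fstar ^ 2 - τlo + τhi = 0) :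
    fstar = min ((c2 / (2 * c1)) ^ ((1 : ℝ) / 3)) fmax := by
  obtain ⟨hf0, hfle⟩ := hf
  obtain rfl : τlo = 0 := (mul_eq_zero.mp hcs1).resolve_right hf0.ne'
  have hbal : 2 * c1 * fstar ^ 3 + τhi * fstar ^ 2 = c2 := by
    field_simp at hstat
    linarith
  have hcube : fstar ^ 3 ≤ c2 / (2 * c1) := by
    rw [le_div_iff₀ (by positivity)]
    nlinarith [mul_nonneg hτhi (sq_nonneg fstar)]
  have hq : 0 ≤ c2 / (2 * c1) := (by positivity : (0 : ℝ) ≤ fstar ^ 3).trans hcube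
  rw [eq_comm, min_eq_iff]
  rcases mul_eq_zero.mp hcs2 with rfl | hfmax
  · have hfstar : fstar = (c2 / (2 * c1)) ^ ((1 : ℝ) / 3) := by
      rw [Real.eq_rpow_one_div_three_iff hf0.le hq, eq_div_iff (by positivity)]
      linarith
    exact Or.inl ⟨hfstar.symm, hfstar ▸ hfle⟩
  · obtain rfl : fstar = fmax := by linarith
    exact Or.inr ⟨rfl, (Real.le_rpow_one_div_three_iff hf0.le hq).2 hcube⟩

/-- KKT characterization: any KKT point of `min c1 f² + c2/f` over `0 ≤ f ≤ fmax`
satisfies `f* = min((c2/(2c1))^{1/3}, fmax)`. -/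
theorem stmt_16 (c1 c2 fmax : ℝ) (hc1 : 0 < c1) (hc2 : 0 < c2) (hfmax : 0 < fmax)
    (fstar τlo τhi : ℝ)
    (hf : fstar ∈ Set.Ioc (0 : ℝ) fmax)
    (hτlo : 0 ≤ τlo) (hτhi : 0 ≤ τhi)
    (hcs1 : τlo * fstar = 0) (hcs2 : τhi * (fstar - fmax) = 0)
    (hstat : 2 * c1 * fstar - c2 / fstar ^ 2 - τlo + τhi = 0) :
    fstar = min ((c2 / (2 * c1)) ^ ((1 : ℝ) / 3)) fmax :=
  stmt_16_general c1 c2 fmax hc1 fstar τlo τhi hf hτhi hcs1 hcs2 hstat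
end
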